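/- arXiv:1612.01169 — 2 statements merged into one kernel-verified Lean document; each statement's English description precedes it below -/
import Mathlib

section
/- Let Δ be a (d-1)-dimensional flag homology sphere with d ≥ 3. If π_Δ = γ_1(Δ) + 1 (i.e. the polar size attains its maximum possible value), then γ_1(Δ) = 0 and Δ is an octahedral sphere (the boundary of the d-dimensional cross-polytope, i.e. the d-fold join of S^0). -/
open Finset Polynomial

noncomputable section

/-- An abstract simplicial complex on vertex type `V` (the empty set is always a face). -/
structure SC (V : Type) where
  faces : Set (Finset V)
  empty_mem : ∅ ∈ faces
  down : ∀ ⦃s t : Finset V⦄, s ∈ faces → t ⊆ s → t ∈ faces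

namespace SC

variable {V W : Type} [DecidableEq V] [DecidableEq W]

/-- The vertex set of a simplicial complex. -/
def verts (K : SC V) : Set V := {v | {v} ∈ K.faces}

/-- The set of faces of cardinality `n`. -/
def facesCard (K : SC V) (n : ℕ) : Set (Finset V) := {s | s ∈ K.faces ∧ s.card = n}

/-- `fvec K i` is the number of faces of cardinality `i` (so `fvec K 0 = 1`). -/
def fvec (K : SC V) (i : ℕ) : ℕ := (K.facesCard i).ncard

/-- A complex is flag if every clique of its graph (on its vertex set) is a face;
equivalently, all minimal non-faces have two elements. -/
def Flag (K : SC V) : Prop :=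
  ∀ s : Finset V, ↑s ⊆ K.verts →
    (∀ u ∈ s, ∀ v ∈ s, u ≠ v → ({u, v} : Finset V) ∈ K.faces) → s ∈ K.faces

/-- The link of a face. -/
def lk (K : SC V) (f : Finset V) : SC V where
  faces := {s | s = ∅ ∨ (Disjoint s f ∧ s ∪ f ∈ K.faces)}
  empty_mem := Or.inl rfl
  down := by
    rintro s t (rfl | ⟨hd, hu⟩) hts
    · exact Or.inl (Finset.subset_empty.mp hts)
    · exact Or.inr ⟨hd.mono_left hts, K.down hu (Finset.union_subset_union hts le_rfl)⟩

/-- The induced subcomplex on a set `U` of vertices. -/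
def induce (K : SC V) (U : Set V) : SC V where
  faces := {s | s ∈ K.faces ∧ ↑s ⊆ U}
  empty_mem := ⟨K.empty_mem, by simp⟩
  down := fun s t hs hts => ⟨K.down hs.1 hts, (Finset.coe_subset.mpr hts).trans hs.2⟩

/-- The `k`-skeleton: all faces of dimension at most `k` (cardinality at most `k+1`). -/
def skeleton (K : SC V) (k : ℕ) : SC V where
  faces := {s | s ∈ K.faces ∧ s.card ≤ k + 1}
  empty_mem := ⟨K.empty_mem, by simp⟩
  down := fun s t hs hts => ⟨K.down hs.1 hts, le_trans (Finset.card_le_card hts) hs.2⟩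

/-- The join of two simplicial complexes. -/
def join (K : SC V) (L : SC W) : SC (V ⊕ W) where
  faces := {s | s.toLeft ∈ K.faces ∧ s.toRight ∈ L.faces}
  empty_mem := by
    have h1 : (∅ : Finset (V ⊕ W)).toLeft = ∅ := by ext a; simp
    have h2 : (∅ : Finset (V ⊕ W)).toRight = ∅ := by ext a; simp
    exact ⟨h1 ▸ K.empty_mem, h2 ▸ L.empty_mem⟩
  down := fun s t hs hts =>
    ⟨K.down hs.1 fun a ha => Finset.mem_toLeft.mpr (hts (Finset.mem_toLeft.mp ha)),
     L.down hs.2 fun a ha => Finset.mem_toRight.mpr (hts (Finset.mem_toRight.mp ha))⟩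

/-- The two-point (0-dimensional) sphere `S⁰`. -/
def S0 : SC Bool where
  faces := {s | s.card ≤ 1}
  empty_mem := by simp
  down := fun s t hs hts => le_trans (Finset.card_le_card hts) hs

/-- The suspension `ΣK = S⁰ ∗ K`. -/
def susp (K : SC V) : SC (Bool ⊕ V) := S0.join K

/-- An isomorphism of simplicial complexes along a vertex map. -/
def IsIso (φ : V → W) (K : SC V) (L : SC W) : Prop :=
  Set.InjOn φ K.verts ∧ φ '' K.verts = L.verts ∧
    ∀ s : Finset V, ↑s ⊆ K.verts → (s ∈ K.faces ↔ s.image φ ∈ L.faces)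

/-- Two simplicial complexes are isomorphic (have the same combinatorial type). -/
def Isom (K : SC V) (L : SC W) : Prop := ∃ φ : V → W, IsIso φ K L

/-- The cycle (1-dimensional sphere) on `n` vertices. -/
def cycleC (n : ℕ) : SC (Fin n) where
  faces := {s | s.card ≤ 1 ∨ ∃ i : Fin n, s ⊆ {i, Fin.mk ((i.1 + 1) % n) (Nat.mod_lt _ i.pos)}}
  empty_mem := Or.inl (by simp)
  down := by
    rintro s t (h | ⟨i, hi⟩) hts
    · exact Or.inl (le_trans (Finset.card_le_card hts) h)
    · exact Or.inr ⟨i, hts.trans hi⟩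

/-- The part of a face in the `j`-th pentagon. -/
def pentPart {m k : ℕ} (j : Fin k) (s : Finset ((Fin m × Fin 2) ⊕ (Fin k × Fin 5))) :
    Finset (Fin 5) :=
  Finset.univ.filter fun i => Sum.inr (j, i) ∈ s

/-- The complex `Σ^m ∗^k C₅`: the `m`-fold suspension of the join of `k` pentagons
(for `k = 0` this is the octahedral sphere, boundary of the `m`-dimensional cross-polytope). -/
def sigmaJoinC5 (m k : ℕ) : SC ((Fin m × Fin 2) ⊕ (Fin k × Fin 5)) where
  faces := {s | (∀ j : Fin m, ¬ (Sum.inl (j, 0) ∈ s ∧ Sum.inl (j, 1) ∈ s)) ∧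
      ∀ j : Fin k, (pentPart j s).card ≤ 1 ∨ ∃ i : Fin 5, pentPart j s ⊆ {i, i + 1}}
  empty_mem := by
    refine ⟨by simp, fun j => Or.inl ?_⟩
    simp [pentPart]
  down := by
    intro s t hs hts
    refine ⟨fun j hj => hs.1 j ⟨hts hj.1, hts hj.2⟩, fun j => ?_⟩
    have hsub : pentPart j t ⊆ pentPart j s := fun i hi => by
      simp only [pentPart, Finset.mem_filter] at *
      exact ⟨hi.1, hts hi.2⟩
    rcases hs.2 j with h | ⟨i, hi⟩
    · exact Or.inl (le_trans (Finset.card_le_card hsub) h)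
    · exact Or.inr ⟨i, hsub.trans hi⟩

/-- The antipode number of a vertex: the number of vertices `w` with `{v,w}` a missing edge. -/
def iota (K : SC V) (v : V) : ℕ :=
  {w | w ∈ K.verts ∧ w ≠ v ∧ ({v, w} : Finset V) ∉ K.faces}.ncard

/-- The polar size: the minimal antipode number among vertices. -/
def polar (K : SC V) : ℕ := sInf (K.iota '' K.verts)

/-- The number of missing edges. -/
def missingEdges (K : SC V) : ℕ :=
  {s : Finset V | ↑s ⊆ K.verts ∧ s.card = 2 ∧ s ∉ K.faces}.ncard

/-- A facet is an inclusion-maximal face. -/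
def IsFacet (K : SC V) (s : Finset V) : Prop :=
  s ∈ K.faces ∧ ∀ t ∈ K.faces, s ⊆ t → t = s

/-- The `h`-polynomial of a complex of dimension `d-1`:
`h(z) = Σ_i f_i (z-1)^(d-i)`. -/
def hPoly (K : SC V) (d : ℕ) : Polynomial ℤ :=
  ∑ i ∈ Finset.range (d + 1), Polynomial.C (K.fvec i : ℤ) * (Polynomial.X - 1) ^ (d - i)

/-- `γ : ℕ → ℤ` is the γ-vector of `K` (viewed as a `(d-1)`-dimensional homology sphere):
`h(z) = Σ_i γ_i z^i (1+z)^(d-2i)` with `γ_i = 0` for `i > d/2`. -/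
def IsGammaVector (K : SC V) (d : ℕ) (γ : ℕ → ℤ) : Prop :=
  (∀ i, d < 2 * i → γ i = 0) ∧
  K.hPoly d = ∑ i ∈ Finset.range (d / 2 + 1),
    Polynomial.C (γ i) * Polynomial.X ^ i * (1 + Polynomial.X) ^ (d - 2 * i)

/-- The simplicial boundary operator over `𝔽₂`, indexed by cardinality:
`boundary K n` maps chains supported on faces of cardinality `n+1` to chains on faces of
cardinality `n`. -/
def boundary (K : SC V) (n : ℕ) :
    ((K.facesCard (n + 1)) →₀ ZMod 2) →ₗ[ZMod 2] ((K.facesCard n) →₀ ZMod 2) :=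
  Finsupp.lsum (ZMod 2) fun s => LinearMap.toSpanSingleton (ZMod 2) _ <|
    ∑ v ∈ s.1.attach,
      Finsupp.single (⟨s.1.erase v.1,
        ⟨K.down s.2.1 (Finset.erase_subset _ _),
          by simp [Finset.card_erase_of_mem v.2, s.2.2]⟩⟩ : K.facesCard n) 1

/-- The cycles of cardinality `n` (every `0`-chain is a cycle; this yields reduced homology). -/
def cycles (K : SC V) : (n : ℕ) → Submodule (ZMod 2) ((K.facesCard n) →₀ ZMod 2)
  | 0 => ⊤
  | (n + 1) => LinearMap.ker (K.boundary n)

/-- `K` is a homology sphere of dimension `d-1` (over the field `𝔽₂`): it is pure of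
dimension `d-1` and, for every face `f`, the reduced homology of the link of `f` vanishes
below the top dimension `d-1-|f|` and has rank one there. (Homological dimension `i`
corresponds to cardinality index `i+1`.) -/
def IsHomologySphere (K : SC V) (d : ℕ) : Prop :=
  (∀ s ∈ K.faces, s.card ≤ d) ∧
  (∀ s ∈ K.faces, ∃ t ∈ K.faces, s ⊆ t ∧ t.card = d) ∧
  ∀ f ∈ K.faces,
    (∀ n < d - f.card, LinearMap.range ((K.lk f).boundary n) = (K.lk f).cycles n) ∧
    Module.finrank (ZMod 2) ↥((K.lk f).cycles (d - f.card)) =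
      Module.finrank (ZMod 2) ↥(LinearMap.range ((K.lk f).boundary (d - f.card))) + 1

end SC

open SC

section Lemmas

variable {V : Type} [DecidableEq V]

lemma SC.ext' {K L : SC V} (h : K.faces = L.faces) : K = L := by
  cases K; cases L; simp_all

namespace SC

variable {K : SC V}

lemma mem_lk_iff {f s : Finset V} (hf : f ∈ K.faces) :
    s ∈ (K.lk f).faces ↔ Disjoint s f ∧ s ∪ f ∈ K.faces := by
  constructor
  · rintro (rfl | h)
    · simpa using hf
    · exact h
  · exact Or.inr

lemma mem_verts_lk_iff {f : Finset V} (hf : f ∈ K.faces) {w : V} :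
    w ∈ (K.lk f).verts ↔ w ∉ f ∧ insert w f ∈ K.faces := by
  rw [verts, Set.mem_setOf_eq, mem_lk_iff hf, ← Finset.insert_eq]
  simp [Finset.disjoint_left]

lemma singleton_mem_of_mem_face {s : Finset V} (hs : s ∈ K.faces) {v : V} (hv : v ∈ s) :
    {v} ∈ K.faces := K.down hs (by simpa using hv)

lemma mem_verts_of_mem_face {s : Finset V} (hs : s ∈ K.faces) {v : V} (hv : v ∈ s) :
    v ∈ K.verts := singleton_mem_of_mem_face hs hv

lemma pair_mem_of_mem_face {s : Finset V} (hs : s ∈ K.faces) {u v : V}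
    (hu : u ∈ s) (hv : v ∈ s) : ({u, v} : Finset V) ∈ K.faces :=
  K.down hs (by simp [Finset.insert_subset_iff, hu, hv])

lemma lk_lk (f g : Finset V) (hf : f ∈ K.faces) (hg : g ∈ (K.lk f).faces) :
    (K.lk f).lk g = K.lk (g ∪ f) := by
  have hg2 := (mem_lk_iff hf).mp hg
  apply SC.ext'
  ext s
  rw [mem_lk_iff (K := K.lk f) hg, mem_lk_iff hf, mem_lk_iff (K := K) hg2.2]
  constructor
  · rintro ⟨h1, h2, h3⟩
    refine ⟨?_, by rwa [Finset.union_assoc] at h3⟩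
    rw [Finset.disjoint_union_right]
    exact ⟨h1, h2.mono_left Finset.subset_union_left⟩
  · rintro ⟨h1, h2⟩
    rw [Finset.disjoint_union_right] at h1
    refine ⟨h1.1, ?_, by rwa [Finset.union_assoc]⟩
    rw [Finset.disjoint_union_left]
    exact ⟨h1.2, hg2.1⟩

lemma flag_lk (hflag : K.Flag) {f : Finset V} (hf : f ∈ K.faces) : (K.lk f).Flag := by
  intro s hs hpair
  have hsv : ∀ u ∈ s, u ∉ f ∧ insert u f ∈ K.faces := by
    intro u hu
    exact (mem_verts_lk_iff hf).mp (hs hu)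
  rw [mem_lk_iff hf]
  have hdisj : Disjoint s f := Finset.disjoint_left.mpr fun {a} ha => (hsv a ha).1
  refine ⟨hdisj, hflag _ ?_ ?_⟩
  · intro x hx
    rcases Finset.mem_union.mp hx with h | h
    · exact mem_verts_of_mem_face (hsv x h).2 (Finset.mem_insert_self _ _)
    · exact mem_verts_of_mem_face hf h
  · intro u hu v hv huv
    rcases Finset.mem_union.mp hu with hu' | hu' <;> rcases Finset.mem_union.mp hv with hv' | hv'
    · have := hpair u hu' v hv' huv
      rw [mem_lk_iff hf] at this
      exact K.down this.2 (by intro x hx; simp at hx; rcases hx with rfl|rfl <;> simp)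
    · exact pair_mem_of_mem_face (hsv u hu').2 (Finset.mem_insert_self _ _)
        (Finset.mem_insert_of_mem hv')
    · exact pair_mem_of_mem_face (hsv v hv').2 (Finset.mem_insert_of_mem hu')
        (Finset.mem_insert_self _ _)
    · exact pair_mem_of_mem_face hf hu' hv'

lemma hom_clauses_congr {A B : SC V} (e : A = B) {m m' : ℕ} (em : m' = m)
    (h : (∀ n < m, LinearMap.range (B.boundary n) = B.cycles n) ∧
      Module.finrank (ZMod 2) ↥(B.cycles m) =
        Module.finrank (ZMod 2) ↥(LinearMap.range (B.boundary m)) + 1) :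
    (∀ n < m', LinearMap.range (A.boundary n) = A.cycles n) ∧
      Module.finrank (ZMod 2) ↥(A.cycles m') =
        Module.finrank (ZMod 2) ↥(LinearMap.range (A.boundary m')) + 1 := by
  subst e; subst em; exact h

/-- The link of a face of a homology sphere is a homology sphere. -/
lemma isHomologySphere_lk {d : ℕ} (hK : K.IsHomologySphere d) {f : Finset V}
    (hf : f ∈ K.faces) : (K.lk f).IsHomologySphere (d - f.card) := by
  obtain ⟨hdim, hpure, hhom⟩ := hK
  have hfd : f.card ≤ d := hdim f hf
  refine ⟨?_, ?_, ?_⟩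
  · intro s hs
    rw [mem_lk_iff hf] at hs
    have := hdim _ hs.2
    rw [Finset.card_union_of_disjoint hs.1] at this
    omega
  · intro s hs
    rw [mem_lk_iff hf] at hs
    obtain ⟨t, ht, hst, htd⟩ := hpure _ hs.2
    refine ⟨t \ f, ?_, ?_, ?_⟩
    · rw [mem_lk_iff hf]
      refine ⟨Finset.sdiff_disjoint, ?_⟩
      rwa [Finset.sdiff_union_of_subset (subset_trans Finset.subset_union_right hst)]
    · intro x hx
      exact Finset.mem_sdiff.mpr ⟨hst (Finset.mem_union_left _ hx),
        Finset.disjoint_left.mp hs.1 hx⟩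
    · rw [Finset.card_sdiff_of_subset (subset_trans Finset.subset_union_right hst), htd]
  · intro g hg
    have hg' := (mem_lk_iff hf).mp hg
    have hcard : (g ∪ f).card = g.card + f.card := Finset.card_union_of_disjoint hg'.1
    have harr : d - (g ∪ f).card = d - f.card - g.card := by omega
    exact hom_clauses_congr (lk_lk f g hf hg) harr.symm (hhom (g ∪ f) hg'.2)

end SC

end Lemmas
section Lemmas2

variable {V : Type} [DecidableEq V] [Fintype V]

lemma finrank_finsupp_card (α : Type) [Fintype α] :
    Module.finrank (ZMod 2) (α →₀ ZMod 2) = Fintype.card α := by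
  rw [(Finsupp.linearEquivFunOnFinite (ZMod 2) (ZMod 2) α).finrank_eq]
  simp [Module.finrank_pi]

namespace SC

lemma facesCard_zero (L : SC V) : L.facesCard 0 = {(∅ : Finset V)} := by
  ext s
  simp only [facesCard, Set.mem_setOf_eq, Finset.card_eq_zero, Set.mem_singleton_iff]
  exact ⟨fun h => h.2, fun h => ⟨h ▸ L.empty_mem, h⟩⟩

lemma facesCard_one_eq_image (L : SC V) :
    L.facesCard 1 = (fun v => ({v} : Finset V)) '' L.verts := by
  ext s
  simp only [facesCard, Set.mem_setOf_eq, Finset.card_eq_one, Set.mem_image]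
  constructor
  · rintro ⟨hs, a, rfl⟩
    exact ⟨a, hs, rfl⟩
  · rintro ⟨a, ha, rfl⟩
    exact ⟨ha, a, rfl⟩

lemma two_verts (L : SC V)
    (hcard1 : ∀ s ∈ L.faces, s.card ≤ 1)
    (h0 : LinearMap.range (L.boundary 0) = L.cycles 0)
    (h1 : Module.finrank (ZMod 2) ↥(L.cycles 1) =
      Module.finrank (ZMod 2) ↥(LinearMap.range (L.boundary 1)) + 1) :
    L.verts.ncard = 2 := by
  classical
  haveI f2 : Fintype ↥(L.facesCard 2) := (Set.toFinite _).fintype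
  haveI f1 : Fintype ↥(L.facesCard 1) := (Set.toFinite _).fintype
  haveI f0 : Fintype ↥(L.facesCard 0) := (Set.toFinite _).fintype
  haveI : FiniteDimensional (ZMod 2) (↥(L.facesCard 1) →₀ ZMod 2) :=
    (Finsupp.linearEquivFunOnFinite (ZMod 2) (ZMod 2) _).symm.finiteDimensional
  -- facesCard 2 is empty
  have hC2 : L.facesCard 2 = (∅ : Set (Finset V)) := by
    ext s
    simp only [facesCard, Set.mem_setOf_eq, Set.mem_empty_iff_false, iff_false, not_and]
    intro hs hc
    have := hcard1 s hs
    omega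
  -- boundary 1 is zero
  have hb1 : L.boundary 1 = 0 := by
    apply LinearMap.ext
    intro y
    haveI hE : IsEmpty ↥(L.facesCard 2) := Set.isEmpty_coe_sort.mpr hC2
    have hy : y = 0 := by
      ext a
      exact (hE.false a).elim
    rw [hy, map_zero, LinearMap.zero_apply]
  have hr1 : Module.finrank (ZMod 2) ↥(LinearMap.range (L.boundary 1)) = 0 := by
    rw [hb1, LinearMap.range_zero, finrank_bot]
  -- cycles 1 = ker boundary 0
  have hker : Module.finrank (ZMod 2) ↥(LinearMap.ker (L.boundary 0)) = 1 := by
    have : L.cycles 1 = LinearMap.ker (L.boundary 0) := rfl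
    rw [← this, h1, hr1]
  -- finrank of range boundary 0
  have hcard0 : Fintype.card ↥(L.facesCard 0) = 1 := by
    rw [Fintype.card_eq_one_iff]
    refine ⟨⟨∅, by rw [facesCard_zero]; rfl⟩, ?_⟩
    rintro ⟨s, hs⟩
    rw [facesCard_zero] at hs
    simp only [Subtype.mk_eq_mk]
    exact hs
  have hrange0 : Module.finrank (ZMod 2) ↥(LinearMap.range (L.boundary 0)) = 1 := by
    have htop : L.cycles 0 = (⊤ : Submodule (ZMod 2) (↥(L.facesCard 0) →₀ ZMod 2)) := rfl
    rw [h0, htop, finrank_top, finrank_finsupp_card, hcard0]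
  -- rank-nullity
  have hrn := LinearMap.finrank_range_add_finrank_ker (L.boundary 0)
  rw [hrange0, hker, finrank_finsupp_card] at hrn
  -- translate to verts
  have himg : (L.facesCard 1).ncard = L.verts.ncard := by
    rw [facesCard_one_eq_image]
    exact Set.ncard_image_of_injective _ Finset.singleton_injective
  have hnc : (L.facesCard 1).ncard = Fintype.card ↥(L.facesCard 1) := by
    rw [Set.ncard_eq_toFinset_card', Set.toFinset_card]
  have h01 : Fintype.card ↥(L.facesCard (0 + 1)) = Fintype.card ↥(L.facesCard 1) := rfl
  omega

end SC

end Lemmas2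
section Lemmas3

variable {V : Type} [DecidableEq V] [Fintype V]

namespace SC

variable {K : SC V} {d : ℕ}

lemma exists_partner (hflag : K.Flag) (hK : K.IsHomologySphere d) (hd : 1 ≤ d)
    {F : Finset V} (hF : F ∈ K.faces) (hFd : F.card = d) {x : V} (hx : x ∈ F) :
    ∃ w, w ∈ K.verts ∧ w ∉ F ∧ ({x, w} : Finset V) ∉ K.faces ∧
      {w} ∪ F.erase x ∈ K.faces := by
  classical
  set G := F.erase x with hGdef
  have hG : G ∈ K.faces := K.down hF (Finset.erase_subset _ _)
  have hGc : G.card = d - 1 := by rw [hGdef, Finset.card_erase_of_mem hx, hFd]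
  have hm : (1 : ℕ) = d - G.card := by omega
  have hcl := hom_clauses_congr (rfl : K.lk G = K.lk G) hm (hK.2.2 G hG)
  have hcard1 : ∀ s ∈ (K.lk G).faces, s.card ≤ 1 := by
    intro s hs
    rw [mem_lk_iff hG] at hs
    have := hK.1 _ hs.2
    rw [Finset.card_union_of_disjoint hs.1] at this
    omega
  have h2v : (K.lk G).verts.ncard = 2 :=
    two_verts _ hcard1 (hcl.1 0 (by omega)) hcl.2
  have hxmem : x ∈ (K.lk G).verts := by
    rw [mem_verts_lk_iff hG]
    exact ⟨Finset.notMem_erase _ _, by rw [hGdef, Finset.insert_erase hx]; exact hF⟩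
  obtain ⟨a, b, hab, hset⟩ := Set.ncard_eq_two.mp h2v
  have hx' : x = a ∨ x = b := by
    have := hset ▸ hxmem
    simpa using this
  set w := if x = a then b else a with hw
  have hwx : w ≠ x := by
    rcases hx' with rfl | rfl
    · simp only [hw, if_pos rfl]; exact hab.symm
    · have hxa : x ≠ a := fun h => hab (h ▸ rfl)
      simp only [hw, if_neg hxa]
      exact fun h => hxa h.symm
  have hwmem : w ∈ (K.lk G).verts := by
    rw [hset]
    rcases eq_or_ne x a with h | h <;> simp [hw, h]
  rw [mem_verts_lk_iff hG] at hwmem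
  obtain ⟨hwG, hwf⟩ := hwmem
  have hwverts : w ∈ K.verts := mem_verts_of_mem_face hwf (Finset.mem_insert_self _ _)
  have hwF : w ∉ F := by
    intro hwF
    exact hwG (Finset.mem_erase.mpr ⟨hwx, hwF⟩)
  refine ⟨w, hwverts, hwF, ?_, ?_⟩
  · intro hedge
    have hT : insert w F ∈ K.faces := by
      apply hflag
      · intro u hu
        rcases Finset.mem_insert.mp (by exact_mod_cast hu) with rfl | hu'
        · exact hwverts
        · exact mem_verts_of_mem_face hF hu'
      · intro u hu v' hv' huv
        rcases Finset.mem_insert.mp hu with rfl | hu' <;>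
          rcases Finset.mem_insert.mp hv' with rfl | hv''
        · exact absurd rfl huv
        · -- u = w, v' ∈ F
          rcases eq_or_ne v' x with rfl | hne
          · rw [Finset.pair_comm]; exact hedge
          · exact pair_mem_of_mem_face hwf (Finset.mem_insert_self _ _)
              (Finset.mem_insert_of_mem (Finset.mem_erase.mpr ⟨hne, hv''⟩))
        · -- u ∈ F, v' = w
          rcases eq_or_ne u x with rfl | hne
          · exact hedge
          · exact pair_mem_of_mem_face hwf
              (Finset.mem_insert_of_mem (Finset.mem_erase.mpr ⟨hne, hu'⟩))
              (Finset.mem_insert_self _ _)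
        · exact pair_mem_of_mem_face hF hu' hv''
    have := hK.1 _ hT
    rw [Finset.card_insert_of_notMem hwF, hFd] at this
    omega
  · rw [← Finset.insert_eq]
    exact hwf

lemma two_d_le_ncard_verts (hflag : K.Flag) (hK : K.IsHomologySphere d) (hd : 1 ≤ d) :
    2 * d ≤ K.verts.ncard := by
  classical
  obtain ⟨F, hF, -, hFd⟩ := hK.2.1 ∅ K.empty_mem
  have spec : ∀ x : {y // y ∈ F}, (exists_partner hflag hK hd hF hFd x.2).choose ∈ K.verts ∧
      (exists_partner hflag hK hd hF hFd x.2).choose ∉ F ∧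
      ({x.1, (exists_partner hflag hK hd hF hFd x.2).choose} : Finset V) ∉ K.faces ∧
      {(exists_partner hflag hK hd hF hFd x.2).choose} ∪ F.erase x.1 ∈ K.faces :=
    fun x => (exists_partner hflag hK hd hF hFd x.2).choose_spec
  set w : {y // y ∈ F} → V := fun x => (exists_partner hflag hK hd hF hFd x.2).choose with hwdef
  have winj : Function.Injective w := by
    intro x y hxy
    by_contra hne
    have hxney : x.1 ≠ y.1 := fun h => hne (Subtype.ext h)
    have hx_in : x.1 ∈ F.erase y.1 := Finset.mem_erase.mpr ⟨hxney, x.2⟩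
    have hface : ({x.1, w y} : Finset V) ∈ K.faces :=
      pair_mem_of_mem_face (spec y).2.2.2 (Finset.mem_union_right _ hx_in)
        (Finset.mem_union_left _ (Finset.mem_singleton_self _))
    rw [← hxy] at hface
    exact (spec x).2.2.1 hface
  set W : Finset V := F ∪ F.attach.image w with hWdef
  have hWcard : W.card = 2 * d := by
    rw [hWdef, Finset.card_union_of_disjoint, Finset.card_image_of_injective _ winj,
      Finset.card_attach, hFd]
    · omega
    · rw [Finset.disjoint_right]
      intro z hz
      obtain ⟨x, -, rfl⟩ := Finset.mem_image.mp hz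
      exact (spec x).2.1
  have hWsub : (↑W : Set V) ⊆ K.verts := by
    intro z hz
    rcases Finset.mem_union.mp (by exact_mod_cast hz) with h | h
    · exact mem_verts_of_mem_face hF h
    · obtain ⟨x, -, rfl⟩ := Finset.mem_image.mp h
      exact (spec x).1
  calc 2 * d = (↑W : Set V).ncard := by rw [Set.ncard_coe_finset, hWcard]
    _ ≤ K.verts.ncard := Set.ncard_le_ncard hWsub (Set.toFinite _)

end SC

end Lemmas3
section Lemmas4

variable {V : Type} [DecidableEq V] [Fintype V]

namespace SC

variable {K : SC V} {d : ℕ}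

lemma mem_verts_lk_singleton {v : V} (hv : v ∈ K.verts) {w : V} :
    w ∈ (K.lk {v}).verts ↔ w ≠ v ∧ ({v, w} : Finset V) ∈ K.faces := by
  rw [mem_verts_lk_iff hv, Finset.mem_singleton]
  have : insert w ({v} : Finset V) = {v, w} := by rw [Finset.insert_eq, Finset.pair_comm]; rfl
  rw [this]

lemma verts_partition {v : V} (hv : v ∈ K.verts) :
    K.verts.ncard = 1 + (K.lk {v}).verts.ncard + K.iota v := by
  classical
  set A := (K.lk {v}).verts with hA
  set B := {w | w ∈ K.verts ∧ w ≠ v ∧ ({v, w} : Finset V) ∉ K.faces} with hB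
  have hAsub : A ⊆ K.verts := by
    intro w hw
    rw [hA, mem_verts_lk_singleton hv] at hw
    exact mem_verts_of_mem_face hw.2 (Finset.mem_insert_of_mem (Finset.mem_singleton_self _))
  have hdecomp : K.verts = insert v (A ∪ B) := by
    ext w
    simp only [Set.mem_insert_iff, Set.mem_union]
    constructor
    · intro hw
      rcases eq_or_ne w v with rfl | hne
      · exact Or.inl rfl
      · by_cases hface : ({v, w} : Finset V) ∈ K.faces
        · exact Or.inr (Or.inl ((mem_verts_lk_singleton hv).mpr ⟨hne, hface⟩))
        · exact Or.inr (Or.inr ⟨hw, hne, hface⟩)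
    · rintro (rfl | h | h)
      · exact hv
      · exact hAsub h
      · exact h.1
  have hvA : v ∉ A ∪ B := by
    rintro (h | h)
    · exact ((mem_verts_lk_singleton hv).mp h).1 rfl
    · exact h.2.1 rfl
  have hdisj : Disjoint A B := by
    rw [Set.disjoint_left]
    intro w hwA hwB
    exact hwB.2.2 ((mem_verts_lk_singleton hv).mp hwA).2
  rw [hdecomp, Set.ncard_insert_of_notMem hvA (Set.toFinite _),
    Set.ncard_union_eq hdisj (Set.toFinite _) (Set.toFinite _)]
  have : K.iota v = B.ncard := rfl
  omega

lemma lk_verts_lower (hflag : K.Flag) (hK : K.IsHomologySphere d) (hd : 2 ≤ d)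
    {v : V} (hv : v ∈ K.verts) : 2 * (d - 1) ≤ (K.lk {v}).verts.ncard := by
  have h1 := isHomologySphere_lk hK hv
  rw [Finset.card_singleton] at h1
  exact two_d_le_ncard_verts (flag_lk hflag hv) h1 (by omega)

lemma unique_antipode (hflag : K.Flag) (hK : K.IsHomologySphere d) (hd : 2 ≤ d)
    (hn : K.verts.ncard = 2 * d) {u : V} (hu : u ∈ K.verts) :
    ∃! x, x ∈ K.verts ∧ x ≠ u ∧ ({u, x} : Finset V) ∉ K.faces := by
  classical
  obtain ⟨F, hF, huF, hFd⟩ := hK.2.1 {u} hu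
  have huF' : u ∈ F := huF (Finset.mem_singleton_self _)
  obtain ⟨w, hwv, hwF, hwe, -⟩ := exists_partner hflag hK (by omega) hF hFd huF'
  have hwu : w ≠ u := fun h => hwF (h ▸ huF')
  refine ⟨w, ⟨hwv, hwu, hwe⟩, ?_⟩
  intro y ⟨hyv, hyu, hye⟩
  by_contra hne
  have hsub : (K.lk {u}).verts ⊆ K.verts \ {u, w, y} := by
    intro z hz
    rw [mem_verts_lk_singleton hu] at hz
    refine ⟨mem_verts_of_mem_face hz.2
      (Finset.mem_insert_of_mem (Finset.mem_singleton_self _)), ?_⟩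
    simp only [Set.mem_insert_iff, Set.mem_singleton_iff, not_or]
    refine ⟨hz.1, ?_, ?_⟩
    · rintro rfl; exact hwe hz.2
    · rintro rfl; exact hye hz.2
  have htsub : ({u, w, y} : Set V) ⊆ K.verts := by
    rintro z (rfl | rfl | rfl)
    · exact hu
    · exact hwv
    · exact hyv
  have ht3 : ({u, w, y} : Set V).ncard = 3 := by
    rw [Set.ncard_insert_of_notMem (by simp [Ne.symm hwu, Ne.symm hyu]) (Set.toFinite _),
      Set.ncard_pair (fun h => hne h.symm)]
  have hdiff : (K.verts \ {u, w, y}).ncard = K.verts.ncard - 3 := by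
    rw [Set.ncard_diff htsub (Set.toFinite _), ht3]
  have hlow := lk_verts_lower hflag hK hd hu
  have hle := Set.ncard_le_ncard hsub (Set.toFinite _)
  have hvc := verts_partition hu
  omega

end SC

end Lemmas4
section Lemmas5

variable {V : Type} [DecidableEq V] [Fintype V]

namespace SC

variable {K : SC V} {d : ℕ}

/-- Adjacency in the 1-skeleton. -/
def Adj (K : SC V) (a b : V) : Prop := a ≠ b ∧ ({a, b} : Finset V) ∈ K.faces

lemma Adj.symm' {a b : V} (h : K.Adj a b) : K.Adj b a :=
  ⟨h.1.symm, by rw [Finset.pair_comm]; exact h.2⟩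

lemma lk_empty : K.lk (∅ : Finset V) = K := by
  apply SC.ext'
  ext s
  simp only [lk, Set.mem_setOf_eq, Finset.disjoint_empty_right, Finset.union_empty, true_and]
  constructor
  · rintro (rfl | h)
    · exact K.empty_mem
    · exact h
  · exact Or.inr

lemma reach_of_homology (hK : K.IsHomologySphere d) (hd : 2 ≤ d)
    {u v : V} (hu : u ∈ K.verts) (hv : v ∈ K.verts) :
    Relation.ReflTransGen K.Adj u v := by
  classical
  rcases eq_or_ne u v with rfl | huv
  · exact Relation.ReflTransGen.refl
  by_contra hreach
  -- homology clauses for K itself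
  have hcl := hom_clauses_congr (lk_empty (K := K)).symm
    (by simp : d = d - (∅ : Finset V).card) (hK.2.2 ∅ K.empty_mem)
  have hrange := hcl.1 1 (by omega)
  -- the indicator functional
  set P : Finset V → Prop := fun t => ∃ x ∈ t, Relation.ReflTransGen K.Adj u x with hP
  set χ : (↥(K.facesCard 1) →₀ ZMod 2) →ₗ[ZMod 2] ZMod 2 :=
    Finsupp.lsum (ZMod 2) (fun s => LinearMap.toSpanSingleton (ZMod 2) (ZMod 2)
      (if P s.1 then 1 else 0)) with hχ
  have hχ_single : ∀ (s : ↥(K.facesCard 1)) (b : ZMod 2),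
      χ (Finsupp.single s b) = b * (if P s.1 then 1 else 0) := by
    intro s b
    rw [hχ, Finsupp.lsum_single, LinearMap.toSpanSingleton_apply, smul_eq_mul]
  -- the cycle z
  set u' : ↥(K.facesCard 1) := ⟨{u}, hu, Finset.card_singleton u⟩ with hu'
  set v' : ↥(K.facesCard 1) := ⟨{v}, hv, Finset.card_singleton v⟩ with hv'
  set z : ↥(K.facesCard 1) →₀ ZMod 2 := Finsupp.single u' 1 + Finsupp.single v' 1 with hz
  have hbz : ∀ (s : ↥(K.facesCard 1)),
      K.boundary 0 (Finsupp.single s 1)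
        = Finsupp.single ⟨∅, K.empty_mem, Finset.card_empty⟩ 1 := by
    intro s
    rw [boundary, Finsupp.lsum_single, LinearMap.toSpanSingleton_apply, one_smul]
    obtain ⟨x0, hx0⟩ := Finset.card_eq_one.mp
      (by rw [Finset.card_attach]; exact s.2.2 : s.1.attach.card = 1)
    rw [hx0, Finset.sum_singleton]
    congr 1
    apply Subtype.ext
    rw [← Finset.card_eq_zero, Finset.card_erase_of_mem x0.2, s.2.2]
  have hzker : z ∈ LinearMap.ker (K.boundary 0) := by
    rw [LinearMap.mem_ker, hz, map_add, hbz u', hbz v', ← Finsupp.single_add]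
    have h2 : (1 : ZMod 2) + 1 = 0 := by decide
    rw [h2, Finsupp.single_zero]
  have hzrange : z ∈ LinearMap.range (K.boundary 1) := by
    rw [hrange]
    exact hzker
  obtain ⟨y, hy⟩ := hzrange
  -- χ kills boundaries
  have hχb : ∀ (e : ↥(K.facesCard 2)) (b : ZMod 2),
      χ (K.boundary 1 (Finsupp.single e b)) = 0 := by
    intro e b
    rw [boundary, Finsupp.lsum_single, LinearMap.toSpanSingleton_apply, map_smul, map_sum]
    obtain ⟨a, c, hac, hace⟩ := Finset.card_eq_two.mp e.2.2
    have hsum : ∀ x ∈ e.1.attach,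
        χ (Finsupp.single (⟨e.1.erase x.1, K.down e.2.1 (Finset.erase_subset _ _),
          by simp [Finset.card_erase_of_mem x.2, e.2.2]⟩ : ↥(K.facesCard 1)) 1)
        = (if P (e.1.erase x.1) then 1 else 0) := by
      intro x hx
      rw [hχ_single, one_mul]
    rw [Finset.sum_congr rfl hsum, Finset.sum_attach e.1 (fun t => if P (e.1.erase t) then (1 : ZMod 2) else 0)]
    have hadj : K.Adj a c := by
      refine ⟨hac, ?_⟩
      rw [← hace]; exact e.2.1
    have hea : ({a, c} : Finset V).erase a = {c} := by
      rw [Finset.erase_insert (by simp [hac])]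
    have hec : ({a, c} : Finset V).erase c = {a} := by
      rw [Finset.pair_comm, Finset.erase_insert (by simp [Ne.symm hac])]
    have hiff : P ({a} : Finset V) ↔ P ({c} : Finset V) := by
      rw [hP]
      simp only [Finset.mem_singleton, exists_eq_left]
      exact ⟨fun h => h.tail hadj, fun h => h.tail hadj.symm'⟩
    rw [hace, Finset.sum_pair hac, hea, hec]
    rcases Classical.em (P ({c} : Finset V)) with h | h
    · rw [if_pos h, if_pos (hiff.mpr h)]
      have h2 : (1 : ZMod 2) + 1 = 0 := by decide
      rw [h2, smul_zero]
    · rw [if_neg h, if_neg (fun hc => h (hiff.mp hc)), add_zero, smul_zero]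
  have hχy : χ (K.boundary 1 y) = 0 := by
    have : χ.comp (K.boundary 1) = 0 := by
      apply Finsupp.lhom_ext
      intro e b
      exact hχb e b
    calc χ (K.boundary 1 y) = (χ.comp (K.boundary 1)) y := rfl
      _ = 0 := by rw [this]; rfl
  have hχz : χ z = 1 := by
    rw [hz, map_add, hχ_single, hχ_single]
    have hPu : P ({u} : Finset V) := ⟨u, Finset.mem_singleton_self u, Relation.ReflTransGen.refl⟩
    have hPv : ¬ P ({v} : Finset V) := by
      rw [hP]
      simp only [Finset.mem_singleton, exists_eq_left]
      exact hreach
    rw [if_pos hPu, if_neg hPv]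
    ring
  rw [← hy, hχy] at hχz
  exact one_ne_zero hχz.symm

end SC

end Lemmas5
section Lemmas6

variable {V : Type} [DecidableEq V] [Fintype V]

namespace SC

variable {K : SC V} {d : ℕ}

lemma lkverts_sub_verts {v : V} : (K.lk {v}).verts ⊆ K.verts := by
  intro w hw
  rcases hw with h | h
  · exact absurd h (by simp)
  · exact mem_verts_of_mem_face (K.down h.2 Finset.subset_union_left)
      (Finset.mem_singleton_self _)

lemma lkverts_symm {v w : V} (hv : v ∈ K.verts) (h : w ∈ (K.lk {v}).verts) :
    v ∈ (K.lk {w}).verts := by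
  have hw : w ∈ K.verts := lkverts_sub_verts h
  rw [mem_verts_lk_singleton hv] at h
  rw [mem_verts_lk_singleton hw, Finset.pair_comm]
  exact ⟨h.1.symm, h.2⟩

lemma triangle_mem (hflag : K.Flag) {a b c : V} (hab : ({a, b} : Finset V) ∈ K.faces)
    (hac : ({a, c} : Finset V) ∈ K.faces) (hbc : ({b, c} : Finset V) ∈ K.faces) :
    ({a, b, c} : Finset V) ∈ K.faces := by
  apply hflag
  · intro x hx
    simp only [Finset.coe_insert, Set.mem_insert_iff, Finset.coe_singleton,
      Set.mem_singleton_iff] at hx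
    rcases hx with rfl | rfl | rfl
    · exact mem_verts_of_mem_face hab (by simp)
    · exact mem_verts_of_mem_face hab (by simp)
    · exact mem_verts_of_mem_face hac (by simp)
  · intro x hx y hy hxy
    simp only [Finset.mem_insert, Finset.mem_singleton] at hx hy
    rcases hx with rfl | rfl | rfl <;> rcases hy with rfl | rfl | rfl <;>
      first
        | exact absurd rfl hxy
        | assumption
        | (rw [Finset.pair_comm]; assumption)

lemma pair_lk_iff (hflag : K.Flag) {v u x : V} (hv : v ∈ K.verts)
    (hu : u ∈ (K.lk {v}).verts) (hx : x ∈ (K.lk {v}).verts) (hux : u ≠ x) :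
    ({u, x} : Finset V) ∈ (K.lk {v}).faces ↔ ({u, x} : Finset V) ∈ K.faces := by
  rw [mem_lk_iff hv]
  have hu' := (mem_verts_lk_singleton hv).mp hu
  have hx' := (mem_verts_lk_singleton hv).mp hx
  constructor
  · rintro ⟨-, h⟩
    exact K.down h Finset.subset_union_left
  · intro h
    constructor
    · simp [Finset.disjoint_left, hu'.1, hx'.1]
    · have htri : ({u, x, v} : Finset V) ∈ K.faces := by
        apply triangle_mem hflag h
        · rw [Finset.pair_comm]; exact hu'.2
        · rw [Finset.pair_comm]; exact hx'.2
      have : ({u, x} : Finset V) ∪ {v} = {u, x, v} := by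
        ext y; simp [or_assoc, or_comm (a := y = v)]
      rw [this]
      exact htri

/-- Perfect matching of non-edges inside a vertex link. -/
lemma link_matching (hflag : K.Flag) (hK : K.IsHomologySphere d) (hd : 3 ≤ d)
    {v : V} (hv : v ∈ K.verts) (hn : (K.lk {v}).verts.ncard = 2 * (d - 1)) :
    ∀ u ∈ (K.lk {v}).verts, ∃! x, x ∈ (K.lk {v}).verts ∧ x ≠ u ∧
      ({u, x} : Finset V) ∉ K.faces := by
  intro u hu
  have hMflag := flag_lk hflag hv
  have hMhom := isHomologySphere_lk hK hv
  rw [Finset.card_singleton] at hMhom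
  obtain ⟨x, ⟨hx1, hx2, hx3⟩, hxu⟩ :=
    unique_antipode hMflag hMhom (by omega) hn hu
  have hxK : ({u, x} : Finset V) ∉ K.faces := fun h =>
    hx3 ((pair_lk_iff hflag hv hu hx1 (Ne.symm hx2)).mpr h)
  refine ⟨x, ⟨hx1, hx2, hxK⟩, ?_⟩
  intro y ⟨hy1, hy2, hy3⟩
  exact hxu y ⟨hy1, hy2, fun h => hy3 ((pair_lk_iff hflag hv hu hy1 (Ne.symm hy2)).mp h)⟩

end SC

end Lemmas6
section Lemmas7

variable {V : Type} [DecidableEq V] [Fintype V]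

namespace SC

variable {K : SC V} {d : ℕ}

lemma verts_eq_two_d (hflag : K.Flag) (hK : K.IsHomologySphere d) (hd : 3 ≤ d)
    (hlk : ∀ v ∈ K.verts, (K.lk {v}).verts.ncard = 2 * (d - 1))
    (hne : K.verts.Nonempty) : K.verts.ncard = 2 * d := by
  classical
  obtain ⟨v₀, hv₀⟩ := hne
  set N : V → Set V := fun v => (K.lk {v}).verts with hN
  have hPM : ∀ v ∈ K.verts, ∀ u ∈ N v, ∃! x, x ∈ N v ∧ x ≠ u ∧
      ({u, x} : Finset V) ∉ K.faces :=
    fun v hv => link_matching hflag hK hd hv (hlk v hv)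
  have hNmem : ∀ {v w : V}, v ∈ K.verts →
      (w ∈ N v ↔ w ≠ v ∧ ({v, w} : Finset V) ∈ K.faces) :=
    fun {v w} hv => mem_verts_lk_singleton hv
  have hNsub : ∀ {v : V}, N v ⊆ K.verts := fun {v} => lkverts_sub_verts
  have hNsymm : ∀ {v w : V}, v ∈ K.verts → w ∈ N v → v ∈ N w :=
    fun {v w} hv h => lkverts_symm hv h
  have hNself : ∀ {v : V}, v ∈ K.verts → v ∉ N v := by
    intro v hv h
    exact ((hNmem hv).mp h).1 rfl
  -- if x is in the link of v, distinct from u and from u's match, then {u,x} is an edge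
  have hedge : ∀ {v u x m : V}, v ∈ K.verts → u ∈ N v → x ∈ N v → x ≠ u →
      (m ∈ N v ∧ m ≠ u ∧ ({u, m} : Finset V) ∉ K.faces) → x ≠ m →
      ({u, x} : Finset V) ∈ K.faces := by
    intro v u x m hv hu hx hxu hm hxm
    by_contra hf
    obtain ⟨mm, hmm, huniq⟩ := hPM v hv u hu
    exact hxm ((huniq x ⟨hx, hxu, hf⟩).trans (huniq m hm).symm)
  have hTa : ∀ {v a a' b : V}, v ∈ K.verts → a ∈ N v →
      (a' ∈ N v ∧ a' ≠ a ∧ ({a, a'} : Finset V) ∉ K.faces) →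
      b ∈ N v → b ≠ a → b ≠ a' → b ∈ N a := by
    intro v a a' b hv ha ha' hb hba hba'
    have hface : ({a, b} : Finset V) ∈ K.faces := hedge hv ha hb hba ha' hba'
    rw [hNmem (hNsub ha)]
    exact ⟨hba, hface⟩
  have hv0card : (N v₀).ncard = 2 * (d - 1) := hlk v₀ hv₀
  have hv0inNa : ∀ {a : V}, a ∈ N v₀ → v₀ ∈ N a := fun {a} ha => hNsymm hv₀ ha
  -- the opposite-of-v₀ vertex in each link of a ∈ N v₀
  have hzf : ∀ a : V, a ∈ N v₀ → ∃ za,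
      (za ∈ N a ∧ za ≠ v₀ ∧ ({v₀, za} : Finset V) ∉ K.faces) ∧
      ∀ y, (y ∈ N a ∧ y ≠ v₀ ∧ ({v₀, y} : Finset V) ∉ K.faces) → y = za := by
    intro a ha
    obtain ⟨za, hza, hu⟩ := hPM a (hNsub ha) v₀ (hv0inNa ha)
    exact ⟨za, hza, hu⟩
  have hznotN : ∀ {a za : V}, a ∈ N v₀ →
      (za ∈ N a ∧ za ≠ v₀ ∧ ({v₀, za} : Finset V) ∉ K.faces) → za ∉ N v₀ := by
    intro a za ha hza hzaN
    exact hza.2.2 ((hNmem hv₀).mp hzaN).2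
  have hzadjNa : ∀ {a za b : V}, a ∈ N v₀ →
      (za ∈ N a ∧ za ≠ v₀ ∧ ({v₀, za} : Finset V) ∉ K.faces) →
      b ∈ N a → b ≠ za → b ≠ v₀ → ({za, b} : Finset V) ∈ K.faces := by
    intro a za b ha hza hb hbz hbv
    refine hedge (hNsub ha) hza.1 hb hbz
      ⟨hv0inNa ha, hza.2.1.symm, ?_⟩ hbv
    rw [Finset.pair_comm]
    exact hza.2.2
  -- step 3: the opposite vertex is the same for different a, b
  have hstep3 : ∀ {a b a' za zb : V}, a ∈ N v₀ → b ∈ N v₀ →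
      (a' ∈ N v₀ ∧ a' ≠ a ∧ ({a, a'} : Finset V) ∉ K.faces) → b ≠ a → b ≠ a' →
      (za ∈ N a ∧ za ≠ v₀ ∧ ({v₀, za} : Finset V) ∉ K.faces) →
      ((zb ∈ N b ∧ zb ≠ v₀ ∧ ({v₀, zb} : Finset V) ∉ K.faces) ∧
        ∀ y, (y ∈ N b ∧ y ≠ v₀ ∧ ({v₀, y} : Finset V) ∉ K.faces) → y = zb) →
      za = zb := by
    intro a b a' za zb ha hb ha' hba hba' hza hzb
    have hbNa : b ∈ N a := hTa hv₀ ha ha' hb hba hba'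
    have hbza : b ≠ za := fun h => hznotN ha hza (h ▸ hb)
    have hbv₀ : b ≠ v₀ := fun h => hNself hv₀ (h ▸ hb)
    have hzab : ({za, b} : Finset V) ∈ K.faces := hzadjNa ha hza hbNa hbza hbv₀
    refine hzb.2 za ⟨?_, hza.2.1, hza.2.2⟩
    rw [hNmem (hNsub hb)]
    exact ⟨fun h => hbza h.symm, by rw [Finset.pair_comm]; exact hzab⟩
  -- pick a₁ and its match
  have hNv0ne : (N v₀).Nonempty := by
    rw [← Set.ncard_pos (Set.toFinite _)]
    omega
  obtain ⟨a₁, ha₁⟩ := hNv0ne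
  obtain ⟨a₁', ha₁'p, ha₁'u⟩ := hPM v₀ hv₀ a₁ ha₁
  obtain ⟨z, hzspec, hzuniq⟩ := hzf a₁ ha₁
  -- z is uniform: adjacent to all of N v₀
  have hzadj : ∀ a ∈ N v₀, z ∈ N a := by
    intro a ha
    rcases eq_or_ne a a₁ with rfl | hne₁
    · exact hzspec.1
    rcases eq_or_ne a a₁' with rfl | hne₂
    · -- a = a₁' : go through an auxiliary b
      have hdiff : ((N v₀) \ {a₁, a} : Set V).Nonempty := by
        rw [← Set.ncard_pos (Set.toFinite _)]
        rw [Set.ncard_diff (by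
          intro y hy
          rcases hy with rfl | hy
          · exact ha₁
          · rw [Set.mem_singleton_iff] at hy; exact hy ▸ ha) (Set.toFinite _)]
        have h2 : ({a₁, a} : Set V).ncard = 2 := Set.ncard_pair (Ne.symm ha₁'p.2.1)
        omega
      obtain ⟨b, hbN, hbne⟩ := hdiff
      simp only [Set.mem_insert_iff, Set.mem_singleton_iff, not_or] at hbne
      obtain ⟨b', hb'p, hb'u⟩ := hPM v₀ hv₀ b hbN
      obtain ⟨zb, hzbspec, hzbuniq⟩ := hzf b hbN
      obtain ⟨za', hza'spec, hza'uniq⟩ := hzf a ha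
      -- z = zb
      have h1 : z = zb := hstep3 ha₁ hbN ha₁'p hbne.1 hbne.2 hzspec ⟨hzbspec, hzbuniq⟩
      -- a ≠ b' (else b would be the match of a, i.e. a₁)
      have hab' : a ≠ b' := by
        intro h
        obtain ⟨c, hcp, hcu⟩ := hPM v₀ hv₀ a ha
        have e1 : a₁ = c := hcu a₁ ⟨ha₁, fun hh => ha₁'p.2.1 hh.symm, by
          rw [Finset.pair_comm]; exact ha₁'p.2.2⟩
        have e2 : b = c := hcu b ⟨hbN, hbne.2, by
          have := hb'p.2.2
          rw [← h] at this
          rw [Finset.pair_comm]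
          exact this⟩
        exact hbne.1 (e2.trans e1.symm)
      -- zb = za'
      have h2 : zb = za' := hstep3 hbN ha hb'p (Ne.symm hbne.2) hab' hzbspec
        ⟨hza'spec, hza'uniq⟩
      rw [h1, h2]
      exact hza'spec.1
    · obtain ⟨za', hza'spec, hza'uniq⟩ := hzf a ha
      have h1 : z = za' := hstep3 ha₁ ha ha₁'p hne₁ hne₂ hzspec ⟨hza'spec, hza'uniq⟩
      rw [h1]
      exact hza'spec.1
  have hzverts : z ∈ K.verts := hNsub (hzadj a₁ ha₁)
  have hzneq : z ≠ v₀ := hzspec.2.1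
  have hznot : z ∉ N v₀ := hznotN ha₁ hzspec
  have hNzsub : N v₀ ⊆ N z := fun a ha => hNsymm (hNsub ha) (hzadj a ha)
  have hNz : N z = N v₀ :=
    (Set.eq_of_subset_of_ncard_le hNzsub (by rw [hlk z hzverts, hv0card]) (Set.toFinite _)).symm
  set S : Set V := insert v₀ (insert z (N v₀)) with hS
  have hNv0S : N v₀ ⊆ S := fun y hy => Set.mem_insert_of_mem _ (Set.mem_insert_of_mem _ hy)
  have hclosed : ∀ x ∈ S, N x ⊆ S := by
    intro x hx
    rcases hx with rfl | hx
    · exact hNv0S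
    rcases hx with rfl | hx
    · rw [hNz]; exact hNv0S
    -- x ∈ N v₀
    obtain ⟨a', ha'p, ha'u⟩ := hPM v₀ hv₀ x hx
    obtain ⟨za, hzaspec, hzauniq⟩ := hzf x hx
    have hzza : z = za := hzauniq z ⟨hzadj x hx, hzspec.2.1, hzspec.2.2⟩
    set T : Set V := insert v₀ ((N v₀) \ {x, a'}) with hT
    have hTsub : insert z T ⊆ N x := by
      intro y hy
      rcases hy with rfl | hy
      · exact hzadj x hx
      rcases hy with rfl | hy
      · exact hv0inNa hx
      · obtain ⟨hy1, hy2⟩ := hy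
        simp only [Set.mem_insert_iff, Set.mem_singleton_iff, not_or] at hy2
        exact hTa hv₀ hx ha'p hy1 hy2.1 hy2.2
    have hv₀notdiff : v₀ ∉ ((N v₀) \ {x, a'} : Set V) := fun h => hNself hv₀ h.1
    have hznotT : z ∉ T := by
      rintro (rfl | h)
      · exact hzneq rfl
      · exact hznot h.1
    have hxa'sub : ({x, a'} : Set V) ⊆ N v₀ := by
      rintro y (rfl | hy)
      · exact hx
      · rw [Set.mem_singleton_iff] at hy; exact hy ▸ ha'p.1
    have hTcard : (insert z T : Set V).ncard = 2 * (d - 1) := by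
      rw [Set.ncard_insert_of_notMem hznotT (Set.toFinite _), hT,
        Set.ncard_insert_of_notMem hv₀notdiff (Set.toFinite _),
        Set.ncard_diff hxa'sub (Set.toFinite _), hv0card,
        Set.ncard_pair (Ne.symm ha'p.2.1)]
      omega
    have hNx : insert z T = N x :=
      Set.eq_of_subset_of_ncard_le hTsub
        (by rw [hlk x (hNsub hx), hTcard]) (Set.toFinite _)
    rw [← hNx]
    intro y hy
    rcases hy with rfl | hy
    · exact Set.mem_insert_of_mem _ (Set.mem_insert _ _)
    rcases hy with rfl | hy
    · exact Set.mem_insert _ _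
    · exact hNv0S hy.1
  have hreach : ∀ x, Relation.ReflTransGen K.Adj v₀ x → x ∈ S := by
    intro x hx
    induction hx with
    | refl => exact Set.mem_insert _ _
    | @tail b c hab hadj ih =>
      refine hclosed b ih ?_
      rw [hNmem (mem_verts_of_mem_face hadj.2 (Finset.mem_insert_self _ _))]
      exact ⟨hadj.1.symm, hadj.2⟩
  have hsubS : K.verts ⊆ S := fun x hx =>
    hreach x (reach_of_homology hK (by omega) hv₀ hx)
  have hScard : S.ncard ≤ 2 * d := by
    calc S.ncard ≤ (insert z (N v₀) : Set V).ncard + 1 := Set.ncard_insert_le _ _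
      _ ≤ (N v₀).ncard + 1 + 1 := by
          have := Set.ncard_insert_le z (N v₀)
          omega
      _ ≤ 2 * d := by rw [hv0card]; omega
  have hlow := two_d_le_ncard_verts hflag hK (by omega)
  have := Set.ncard_le_ncard hsubS (Set.toFinite _)
  omega

end SC

end Lemmas7
section Lemmas8

variable {V : Type} [DecidableEq V] [Fintype V]

namespace SC

variable {K : SC V} {d : ℕ}

lemma isom_octahedral (hflag : K.Flag) (hK : K.IsHomologySphere d) (hd : 2 ≤ d)
    (hn : K.verts.ncard = 2 * d) : Isom K (sigmaJoinC5 d 0) := by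
  classical
  obtain ⟨F, hF, -, hFd⟩ := hK.2.1 ∅ K.empty_mem
  have hFverts : ∀ x : ↥F, x.1 ∈ K.verts := fun x => mem_verts_of_mem_face hF x.2
  have spec : ∀ x : ↥F, (exists_partner hflag hK (by omega) hF hFd x.2).choose ∈ K.verts ∧
      (exists_partner hflag hK (by omega) hF hFd x.2).choose ∉ F ∧
      ({x.1, (exists_partner hflag hK (by omega) hF hFd x.2).choose} : Finset V) ∉ K.faces ∧
      {(exists_partner hflag hK (by omega) hF hFd x.2).choose} ∪ F.erase x.1 ∈ K.faces :=
    fun x => (exists_partner hflag hK (by omega) hF hFd x.2).choose_spec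
  set w : ↥F → V := fun x => (exists_partner hflag hK (by omega) hF hFd x.2).choose with hwdef
  have edgeFW : ∀ (x y : ↥F), x ≠ y → ({x.1, w y} : Finset V) ∈ K.faces := by
    intro x y hxy
    have hx_in : x.1 ∈ F.erase y.1 :=
      Finset.mem_erase.mpr ⟨fun h => hxy (Subtype.ext h), x.2⟩
    exact pair_mem_of_mem_face (spec y).2.2.2 (Finset.mem_union_right _ hx_in)
      (Finset.mem_union_left _ (Finset.mem_singleton_self _))
  have winj : Function.Injective w := by
    intro x y hxy
    by_contra hne
    have hface := edgeFW x y hne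
    rw [← hxy] at hface
    exact (spec x).2.2.1 hface
  have hwnex : ∀ (x y : ↥F), w x ≠ y.1 := fun x y h => (spec x).2.1 (by show w x ∈ F; rw [h]; exact y.2)
  -- the vertex set is exactly F together with the partners
  set W : Finset V := F ∪ F.attach.image w with hWdef
  have hWcard : W.card = 2 * d := by
    rw [hWdef, Finset.card_union_of_disjoint, Finset.card_image_of_injective _ winj,
      Finset.card_attach, hFd]
    · omega
    · rw [Finset.disjoint_right]
      intro z hz
      obtain ⟨x, -, rfl⟩ := Finset.mem_image.mp hz
      exact (spec x).2.1
  have hWsub : (↑W : Set V) ⊆ K.verts := by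
    intro z hz
    rcases Finset.mem_union.mp (by exact_mod_cast hz) with h | h
    · exact mem_verts_of_mem_face hF h
    · obtain ⟨x, -, rfl⟩ := Finset.mem_image.mp h
      exact (spec x).1
  have hQ : (↑W : Set V) = K.verts := by
    apply Set.eq_of_subset_of_ncard_le hWsub
    rw [hn, Set.ncard_coe_finset, hWcard]
  have hclass : ∀ y ∈ K.verts, (∃ x : ↥F, y = x.1) ∨ (∃ x : ↥F, y = w x) := by
    intro y hy
    rw [← hQ] at hy
    rcases Finset.mem_union.mp (by exact_mod_cast hy) with h | h
    · exact Or.inl ⟨⟨y, h⟩, rfl⟩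
    · obtain ⟨x, -, rfl⟩ := Finset.mem_image.mp h
      exact Or.inr ⟨x, rfl⟩
  -- perfect matching
  have hpm := fun u (hu : u ∈ K.verts) => unique_antipode hflag hK hd hn hu
  have hmatchF : ∀ (x : ↥F), ∀ y ∈ K.verts, y ≠ x.1 →
      ({x.1, y} : Finset V) ∉ K.faces → y = w x := by
    intro x y hy hyx hface
    obtain ⟨m, hm, hu⟩ := hpm x.1 (hFverts x)
    have h1 := hu y ⟨hy, hyx, hface⟩
    have h2 := hu (w x) ⟨(spec x).1, fun h => (spec x).2.1 (by show w x ∈ F; rw [h]; exact x.2), (spec x).2.2.1⟩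
    rw [h1, h2]
  have hmatchW : ∀ (x : ↥F), ∀ y ∈ K.verts, y ≠ w x →
      ({w x, y} : Finset V) ∉ K.faces → y = x.1 := by
    intro x y hy hyx hface
    obtain ⟨m, hm, hu⟩ := hpm (w x) (spec x).1
    have h1 := hu y ⟨hy, hyx, hface⟩
    have h2 := hu x.1 ⟨hFverts x, Ne.symm (hwnex x x), by
      rw [Finset.pair_comm]; exact (spec x).2.2.1⟩
    rw [h1, h2]
  have edgeWW : ∀ (x y : ↥F), x ≠ y → ({w x, w y} : Finset V) ∈ K.faces := by
    intro x y hxy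
    by_contra hface
    have := hmatchW x (w y) (spec y).1 (fun h => hxy (winj h).symm) hface
    exact hwnex y x this
  -- the equivalence with Fin d
  have hFne : Nonempty ↥F := by
    rw [Finset.nonempty_coe_sort]
    rw [← Finset.card_pos, hFd]; omega
  obtain ⟨x₀⟩ := hFne
  set ε : ↥F ≃ Fin d := F.equivFinOfCardEq hFd with hεdef
  set φ : V → (Fin d × Fin 2) ⊕ (Fin 0 × Fin 5) := fun y =>
    if h : y ∈ F then Sum.inl (ε ⟨y, h⟩, 0)
    else if h2 : ∃ x : ↥F, w x = y then Sum.inl (ε h2.choose, 1)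
    else Sum.inl (ε x₀, 0) with hφdef
  have hφF : ∀ (x : ↥F), φ x.1 = Sum.inl (ε x, 0) := by
    intro x
    rw [hφdef]
    simp only [dif_pos x.2, Subtype.coe_eta]
  have hφW : ∀ (x : ↥F), φ (w x) = Sum.inl (ε x, 1) := by
    intro x
    rw [hφdef]
    have hnF : w x ∉ F := (spec x).2.1
    have hex : ∃ y : ↥F, w y = w x := ⟨x, rfl⟩
    simp only [dif_neg hnF, dif_pos hex]
    congr 2
    exact congrArg ε (winj hex.choose_spec)
  -- facts about the target complex
  have htf : ∀ s' : Finset ((Fin d × Fin 2) ⊕ (Fin 0 × Fin 5)),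
      s' ∈ (sigmaJoinC5 d 0).faces ↔
        ∀ j : Fin d, ¬(Sum.inl (j, 0) ∈ s' ∧ Sum.inl (j, 1) ∈ s') :=
    fun s' => ⟨fun h => h.1, fun h => ⟨h, fun j => j.elim0⟩⟩
  have htv : (sigmaJoinC5 d 0).verts = Set.univ := by
    apply Set.eq_univ_of_forall
    intro y
    rw [verts, Set.mem_setOf_eq, htf]
    intro j ⟨h1, h2⟩
    rw [Finset.mem_singleton] at h1 h2
    rw [← h2] at h1
    have := Sum.inl.inj h1
    have : (0 : Fin 2) = 1 := (Prod.mk.injEq _ _ _ _ ▸ this).2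
    exact absurd this (by decide)
  -- membership in images
  have hin0 : ∀ (s : Finset V), ↑s ⊆ K.verts → ∀ j : Fin d,
      (Sum.inl (j, (0 : Fin 2)) ∈ s.image φ ↔ (ε.symm j).1 ∈ s) := by
    intro s hs j
    rw [Finset.mem_image]
    constructor
    · rintro ⟨y, hy, hφy⟩
      rcases hclass y (hs hy) with ⟨x, rfl⟩ | ⟨x, rfl⟩
      · rw [hφF x] at hφy
        have := Sum.inl.inj hφy
        have hj : ε x = j := (Prod.mk.injEq _ _ _ _ ▸ this).1
        have : x = ε.symm j := by rw [← hj, Equiv.symm_apply_apply]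
        rwa [← this]
      · rw [hφW x] at hφy
        have := (Prod.mk.injEq _ _ _ _ ▸ Sum.inl.inj hφy).2
        exact absurd this (by decide)
    · intro h
      exact ⟨(ε.symm j).1, h, by rw [hφF (ε.symm j), Equiv.apply_symm_apply]⟩
  have hin1 : ∀ (s : Finset V), ↑s ⊆ K.verts → ∀ j : Fin d,
      (Sum.inl (j, (1 : Fin 2)) ∈ s.image φ ↔ w (ε.symm j) ∈ s) := by
    intro s hs j
    rw [Finset.mem_image]
    constructor
    · rintro ⟨y, hy, hφy⟩
      rcases hclass y (hs hy) with ⟨x, rfl⟩ | ⟨x, rfl⟩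
      · rw [hφF x] at hφy
        have := (Prod.mk.injEq _ _ _ _ ▸ Sum.inl.inj hφy).2
        exact absurd this (by decide)
      · rw [hφW x] at hφy
        have hj : ε x = j := (Prod.mk.injEq _ _ _ _ ▸ Sum.inl.inj hφy).1
        have : x = ε.symm j := by rw [← hj, Equiv.symm_apply_apply]
        rwa [← this]
    · intro h
      exact ⟨w (ε.symm j), h, by rw [hφW (ε.symm j), Equiv.apply_symm_apply]⟩
  refine ⟨φ, ?_, ?_, ?_⟩
  · -- injective on verts
    intro u hu x hx hφ
    rcases hclass u hu with ⟨a, rfl⟩ | ⟨a, rfl⟩ <;>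
      rcases hclass x hx with ⟨b, rfl⟩ | ⟨b, rfl⟩
    · rw [hφF a, hφF b] at hφ
      have := (Prod.mk.injEq _ _ _ _ ▸ Sum.inl.inj hφ).1
      rw [ε.injective this]
    · rw [hφF a, hφW b] at hφ
      have := (Prod.mk.injEq _ _ _ _ ▸ Sum.inl.inj hφ).2
      exact absurd this (by decide)
    · rw [hφW a, hφF b] at hφ
      have := (Prod.mk.injEq _ _ _ _ ▸ Sum.inl.inj hφ).2
      exact absurd this (by decide)
    · rw [hφW a, hφW b] at hφ
      have := (Prod.mk.injEq _ _ _ _ ▸ Sum.inl.inj hφ).1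
      rw [ε.injective this]
  · -- image of verts
    rw [htv]
    apply Set.eq_univ_of_forall
    intro t
    rcases t with p | q
    · obtain ⟨j, c⟩ := p
      rcases eq_or_ne c 0 with rfl | hc
      · exact ⟨(ε.symm j).1, hFverts _, by rw [hφF (ε.symm j), Equiv.apply_symm_apply]⟩
      · have hc1 : c = 1 := by omega
        subst hc1
        exact ⟨w (ε.symm j), (spec _).1, by rw [hφW (ε.symm j), Equiv.apply_symm_apply]⟩
    · exact q.1.elim0
  · -- faces
    intro s hs
    rw [htf]
    constructor
    · intro hsf j ⟨h0, h1⟩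
      rw [hin0 s hs j] at h0
      rw [hin1 s hs j] at h1
      exact (spec (ε.symm j)).2.2.1 (pair_mem_of_mem_face hsf h0 h1)
    · intro hnb
      apply hflag s hs
      intro u hu x hx hux
      rcases hclass u (hs hu) with ⟨a, rfl⟩ | ⟨a, rfl⟩ <;>
        rcases hclass x (hs hx) with ⟨b, rfl⟩ | ⟨b, rfl⟩
      · exact pair_mem_of_mem_face hF a.2 b.2
      · rcases eq_or_ne a b with rfl | hab
        · exfalso
          apply hnb (ε a)
          constructor
          · rw [hin0 s hs]
            rwa [Equiv.symm_apply_apply]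
          · rw [hin1 s hs]
            rwa [Equiv.symm_apply_apply]
        · exact edgeFW a b hab
      · rcases eq_or_ne a b with rfl | hab
        · exfalso
          apply hnb (ε a)
          constructor
          · rw [hin0 s hs]
            rwa [Equiv.symm_apply_apply]
          · rw [hin1 s hs]
            rwa [Equiv.symm_apply_apply]
        · rw [Finset.pair_comm]
          exact edgeFW b a (Ne.symm hab)
      · have hab : a ≠ b := fun h => hux (h ▸ rfl)
        exact edgeWW a b hab

end SC

end Lemmas8
/-- If a `(d-1)`-dimensional flag homology sphere on `2d+ℓ` vertices with `d ≥ 3`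
has polar size `γ₁ + 1 = ℓ + 1`, then `ℓ = 0` and it is an octahedral sphere
(the boundary of the `d`-dimensional cross-polytope, i.e. `Σ^d` of the empty complex). -/
theorem polar_max_implies_octahedral {V : Type} [DecidableEq V] [Fintype V]
    (K : SC V) (d ℓ : ℕ) (hd : 3 ≤ d) (hflag : K.Flag) (hK : K.IsHomologySphere d)
    (hcard : K.verts.ncard = 2 * d + ℓ) (hpolar : K.polar = ℓ + 1) :
    ℓ = 0 ∧ Isom K (sigmaJoinC5 d 0) := by
  classical
  have hne : K.verts.Nonempty := by
    by_contra h
    rw [Set.not_nonempty_iff_eq_empty] at h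
    rw [polar, h, Set.image_empty, Nat.sInf_empty] at hpolar
    omega
  have hlb : ∀ v ∈ K.verts, ℓ + 1 ≤ K.iota v := by
    intro v hv
    rw [← hpolar]
    exact Nat.sInf_le ⟨v, hv, rfl⟩
  have hlk : ∀ v ∈ K.verts, (K.lk {v}).verts.ncard = 2 * (d - 1) := by
    intro v hv
    have h1 := verts_partition (K := K) hv
    rw [hcard] at h1
    have h2 := lk_verts_lower hflag hK (by omega) hv
    have h3 := hlb v hv
    omega
  have h2d := verts_eq_two_d hflag hK hd hlk hne
  have hl0 : ℓ = 0 := by rw [hcard] at h2d; omega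
  exact ⟨hl0, isom_octahedral hflag hK (by omega) h2d⟩

end
end

section
/- Let S be a flag homology sphere and T_1 a facet of S. Then there exists a facet T_2 of S disjoint from T_1. -/
open Finset Polynomial

noncomputable section

open SC

namespace SC

variable {V : Type} [DecidableEq V]

lemma sc_ext {K L : SC V} (h : K.faces = L.faces) : K = L := by
  cases K; cases L; cases h; rfl

lemma mem_lk {K : SC V} {g s : Finset V} :
    s ∈ (K.lk g).faces ↔ (s = ∅ ∨ (Disjoint s g ∧ s ∪ g ∈ K.faces)) := Iff.rfl

lemma lk_union_mem {K : SC V} {g s : Finset V} (hg : g ∈ K.faces)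
    (hs : s ∈ (K.lk g).faces) : s ∪ g ∈ K.faces := by
  rcases hs with rfl | ⟨-, h⟩
  · simpa using hg
  · exact h

lemma lk_lk_s12 (K : SC V) (v : V) (f : Finset V) (hv : v ∉ f) :
    (K.lk {v}).lk f = K.lk (insert v f) := by
  apply sc_ext
  ext s
  simp only [mem_lk]
  constructor
  · rintro (rfl | ⟨hd, (h0 | ⟨hdv, hm⟩)⟩)
    · exact Or.inl rfl
    · exact Or.inl (by
        have := Finset.union_eq_empty.mp h0
        exact this.1)
    · refine Or.inr ⟨?_, ?_⟩
      · rw [Finset.disjoint_insert_right]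
        exact ⟨fun hvs => (Finset.disjoint_singleton_right.mp hdv)
          (Finset.mem_union_left _ hvs), hd⟩
      · have : s ∪ insert v f = s ∪ f ∪ {v} := by
          ext x
          simp [Finset.mem_insert, Finset.mem_union, or_comm, or_assoc, or_left_comm]
        rw [this]; exact hm
  · rintro (rfl | ⟨hd, hm⟩)
    · exact Or.inl rfl
    · rcases Finset.disjoint_insert_right.mp hd with ⟨hvs, hdf⟩
      refine Or.inr ⟨hdf, Or.inr ⟨?_, ?_⟩⟩
      · rw [Finset.disjoint_singleton_right, Finset.mem_union]
        rintro (h | h)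
        · exact hvs h
        · exact hv h
      · have : s ∪ f ∪ {v} = s ∪ insert v f := by
          ext x
          simp [Finset.mem_insert, Finset.mem_union, or_comm, or_assoc, or_left_comm]
        rw [this]; exact hm

lemma lk_notMem {K : SC V} {v : V} {f : Finset V} (hf : f ∈ (K.lk {v}).faces) :
    v ∉ f := by
  rcases hf with rfl | ⟨hd, -⟩
  · simp
  · exact Finset.disjoint_singleton_right.mp hd

lemma lk_insert_mem {K : SC V} {v : V} {f : Finset V} (hv : {v} ∈ K.faces)
    (hf : f ∈ (K.lk {v}).faces) : insert v f ∈ K.faces := by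
  have h := lk_union_mem hv hf
  have : f ∪ {v} = insert v f := by
    ext x; simp [Finset.mem_insert, or_comm]
  rwa [this] at h

lemma lk_flag (K : SC V) (hflag : K.Flag) (v : V) (hv : {v} ∈ K.faces) :
    (K.lk {v}).Flag := by
  intro s hverts hedges
  have hvs : ∀ x ∈ s, x ≠ v ∧ ({x} : Finset V) ∪ {v} ∈ K.faces := by
    intro x hx
    have hxv : ({x} : Finset V) ∈ (K.lk {v}).faces := hverts hx
    rcases hxv with h | ⟨hd, hm⟩
    · simp at h
    · exact ⟨Finset.disjoint_singleton.mp hd, hm⟩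
  rcases eq_or_ne s ∅ with rfl | hne
  · exact (K.lk {v}).empty_mem
  have hins : insert v s ∈ K.faces := by
    apply hflag
    · intro x hx
      rcases Finset.mem_insert.mp (by exact_mod_cast hx) with rfl | hx'
      · exact hv
      · exact K.down ((hvs x hx').2) Finset.subset_union_left
    · intro u hu w hw huw
      rcases Finset.mem_insert.mp hu with rfl | hu' <;>
        rcases Finset.mem_insert.mp hw with rfl | hw'
      · exact absurd rfl huw
      · have := (hvs w hw').2
        have hpair : ({u, w} : Finset V) = {w} ∪ {u} := by
          ext x; simp [or_comm]
        rw [hpair]; exact this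
      · have := (hvs u hu').2
        have hpair : ({u, w} : Finset V) = {u} ∪ {w} := by
          ext x; simp
        rw [hpair]; exact this
      · have hedge := hedges u hu' w hw' huw
        rcases hedge with h | ⟨-, hm⟩
        · simp at h
        · exact K.down hm Finset.subset_union_left
  refine Or.inr ⟨?_, ?_⟩
  · rw [Finset.disjoint_singleton_right]
    intro hvmem
    exact (hvs v hvmem).1 rfl
  · have : s ∪ {v} = insert v s := by
      ext x; simp [Finset.mem_insert, or_comm]
    rw [this]; exact hins

lemma hom_cond_congr {K K' : SC V} (h : K = K') {n n' : ℕ} (hn : n = n')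
    (hc : (∀ k < n, LinearMap.range (K.boundary k) = K.cycles k) ∧
        Module.finrank (ZMod 2) ↥(K.cycles n) =
          Module.finrank (ZMod 2) ↥(LinearMap.range (K.boundary n)) + 1) :
    (∀ k < n', LinearMap.range (K'.boundary k) = K'.cycles k) ∧
        Module.finrank (ZMod 2) ↥(K'.cycles n') =
          Module.finrank (ZMod 2) ↥(LinearMap.range (K'.boundary n')) + 1 := by
  subst h; subst hn; exact hc

lemma rank_congr {K : SC V} {n n' : ℕ} (hn : n = n')
    (h : Module.finrank (ZMod 2) ↥(K.cycles n) =
      Module.finrank (ZMod 2) ↥(LinearMap.range (K.boundary n)) + 1) :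
    Module.finrank (ZMod 2) ↥(K.cycles n') =
      Module.finrank (ZMod 2) ↥(LinearMap.range (K.boundary n')) + 1 := by
  subst hn; exact h

lemma lk_sphere (K : SC V) (d : ℕ) (hK : K.IsHomologySphere (d + 1)) (v : V)
    (hv : {v} ∈ K.faces) : (K.lk {v}).IsHomologySphere d := by
  obtain ⟨hbound, hpure, hhom⟩ := hK
  refine ⟨?_, ?_, ?_⟩
  · intro s hs
    rcases hs with rfl | ⟨hd, hm⟩
    · simp
    · have := hbound _ hm
      rw [Finset.card_union_of_disjoint hd, Finset.card_singleton] at this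
      omega
  · intro s hs
    have hsv : insert v s ∈ K.faces := lk_insert_mem hv hs
    obtain ⟨F, hF, hsub, hcard⟩ := hpure _ hsv
    have hvF : v ∈ F := hsub (Finset.mem_insert_self v s)
    refine ⟨F.erase v, ?_, ?_, ?_⟩
    · refine Or.inr ⟨?_, ?_⟩
      · rw [Finset.disjoint_singleton_right]
        exact Finset.notMem_erase v F
      · have : F.erase v ∪ {v} = insert v (F.erase v) := by
          ext x; simp [Finset.mem_insert, or_comm]
        rw [this, Finset.insert_erase hvF]
        exact hF
    · intro x hx
      have hxF : x ∈ F := hsub (Finset.mem_insert_of_mem hx)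
      have hxv : x ≠ v := fun h => (lk_notMem hs) (h ▸ hx)
      exact Finset.mem_erase.mpr ⟨hxv, hxF⟩
    · rw [Finset.card_erase_of_mem hvF, hcard]
      omega
  · intro f hf
    have hvf : v ∉ f := lk_notMem hf
    have hins : insert v f ∈ K.faces := lk_insert_mem hv hf
    have hcard : (insert v f).card = f.card + 1 := Finset.card_insert_of_notMem hvf
    have heq := lk_lk_s12 K v f hvf
    have hsub : d + 1 - (insert v f).card = d - f.card := by
      rw [hcard]; omega
    exact hom_cond_congr heq.symm hsub (hhom (insert v f) hins)

lemma exists_two_vertices (L : SC V) (c : (L.facesCard 1) →₀ ZMod 2)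
    (hc0 : c ≠ 0) (hb : L.boundary 0 c = 0) :
    ∃ w₁ w₂ : V, w₁ ≠ w₂ ∧ ({w₁} : Finset V) ∈ L.faces ∧ ({w₂} : Finset V) ∈ L.faces := by
  classical
  have h0 : (∅ : Finset V) ∈ L.facesCard 0 := ⟨L.empty_mem, Finset.card_empty⟩
  set e0 : L.facesCard 0 := ⟨∅, h0⟩ with he0
  have hsum : (L.boundary 0 c) e0 = ∑ s ∈ c.support, c s := by
    rw [SC.boundary, Finsupp.lsum_apply, Finsupp.sum_apply, Finsupp.sum]
    apply Finset.sum_congr rfl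
    intro s hs
    rw [LinearMap.toSpanSingleton_apply, Finsupp.smul_apply]
    have hone : (∑ x ∈ s.1.attach,
        Finsupp.single (⟨s.1.erase x.1, ⟨L.down s.2.1 (Finset.erase_subset _ _),
          by simp [Finset.card_erase_of_mem x.2, s.2.2]⟩⟩ : L.facesCard 0) (1 : ZMod 2)) e0
        = 1 := by
      rw [Finset.sum_apply']
      have hterm : ∀ x ∈ s.1.attach,
          (Finsupp.single (⟨s.1.erase x.1, ⟨L.down s.2.1 (Finset.erase_subset _ _),
            by simp [Finset.card_erase_of_mem x.2, s.2.2]⟩⟩ : L.facesCard 0)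
            (1 : ZMod 2)) e0 = 1 := by
        intro x hx
        have hval : s.1.erase x.1 = ∅ := by
          apply Finset.card_eq_zero.mp
          rw [Finset.card_erase_of_mem x.2, s.2.2]
        have : (⟨s.1.erase x.1, ⟨L.down s.2.1 (Finset.erase_subset _ _),
            by simp [Finset.card_erase_of_mem x.2, s.2.2]⟩⟩ : L.facesCard 0) = e0 :=
          Subtype.ext hval
        rw [this, Finsupp.single_eq_same]
      rw [Finset.sum_congr rfl hterm, Finset.sum_const, Finset.card_attach, s.2.2]
      simp
    rw [hone, smul_eq_mul, mul_one]
  rw [hb] at hsum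
  have hall : ∀ s ∈ c.support, c s = 1 := by
    intro s hs
    have h1 : c s ≠ 0 := Finsupp.mem_support_iff.mp hs
    have h2 : ∀ a : ZMod 2, a ≠ 0 → a = 1 := by decide
    exact h2 _ h1
  have hcardz : ((c.support.card : ℕ) : ZMod 2) = 0 := by
    have : (0 : ZMod 2) = ∑ s ∈ c.support, c s := by
      rw [← hsum]; simp
    rw [Finset.sum_congr rfl hall, Finset.sum_const, nsmul_eq_mul, mul_one] at this
    exact this.symm
  have hdvd : 2 ∣ c.support.card := (ZMod.natCast_eq_zero_iff _ 2).mp hcardz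
  have hne : c.support.Nonempty := Finsupp.support_nonempty_iff.mpr hc0
  have h2le : 1 < c.support.card := by
    have := Finset.card_pos.mpr hne
    omega
  obtain ⟨a, ha, b, hbmem, hab⟩ := Finset.one_lt_card.mp h2le
  obtain ⟨w₁, hw₁⟩ := Finset.card_eq_one.mp a.2.2
  obtain ⟨w₂, hw₂⟩ := Finset.card_eq_one.mp b.2.2
  refine ⟨w₁, w₂, ?_, ?_, ?_⟩
  · intro h
    apply hab
    apply Subtype.ext
    rw [hw₁, hw₂, h]
  · have := a.2.1; rwa [hw₁] at this
  · have := b.2.1; rwa [hw₂] at this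

lemma flag_contra (S : SC V) (D : ℕ) (hflag : S.Flag)
    (hbound : ∀ s ∈ S.faces, s.card ≤ D)
    (T₁ τ : Finset V) (hT₁ : T₁ ∈ S.faces) (hτcard : τ.card + 1 = D)
    (w₁ w₂ : V) (hne : w₁ ≠ w₂) (h1T : w₁ ∈ T₁) (h2T : w₂ ∈ T₁)
    (h1τ : w₁ ∉ τ) (h2τ : w₂ ∉ τ)
    (hf1 : insert w₁ τ ∈ S.faces) (hf2 : insert w₂ τ ∈ S.faces) : False := by
  have hdown : ∀ (t : Finset V), t ∈ S.faces → ∀ u w : V, u ∈ t → w ∈ t →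
      ({u, w} : Finset V) ∈ S.faces := by
    intro t ht u w hu hw
    apply S.down ht
    intro y hy
    rcases Finset.mem_insert.mp hy with rfl | hy'
    · exact hu
    · rw [Finset.mem_singleton.mp hy']; exact hw
  have hsf : insert w₁ (insert w₂ τ) ∈ S.faces := by
    apply hflag
    · intro x hx
      rcases Finset.mem_insert.mp (by exact_mod_cast hx) with rfl | hx'
      · exact S.down hf1 (Finset.singleton_subset_iff.mpr (Finset.mem_insert_self _ _))
      · rcases Finset.mem_insert.mp hx' with rfl | hx''
        · exact S.down hf2 (Finset.singleton_subset_iff.mpr (Finset.mem_insert_self _ _))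
        · exact S.down hf1
            (Finset.singleton_subset_iff.mpr (Finset.mem_insert_of_mem hx''))
    · intro u hu w hw huw
      rcases Finset.mem_insert.mp hu with rfl | hu'
      · rcases Finset.mem_insert.mp hw with rfl | hw'
        · exact absurd rfl huw
        · rcases Finset.mem_insert.mp hw' with rfl | hw''
          · exact hdown _ hT₁ _ _ h1T h2T
          · exact hdown _ hf1 _ _ (Finset.mem_insert_self _ _)
              (Finset.mem_insert_of_mem hw'')
      · rcases Finset.mem_insert.mp hu' with rfl | hu''
        · rcases Finset.mem_insert.mp hw with rfl | hw'
          · exact hdown _ hT₁ _ _ h2T h1T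
          · rcases Finset.mem_insert.mp hw' with rfl | hw''
            · exact absurd rfl huw
            · exact hdown _ hf2 _ _ (Finset.mem_insert_self _ _)
                (Finset.mem_insert_of_mem hw'')
        · rcases Finset.mem_insert.mp hw with rfl | hw'
          · exact hdown _ hf1 _ _ (Finset.mem_insert_of_mem hu'')
              (Finset.mem_insert_self _ _)
          · rcases Finset.mem_insert.mp hw' with rfl | hw''
            · exact hdown _ hf2 _ _ (Finset.mem_insert_of_mem hu'')
                (Finset.mem_insert_self _ _)
            · exact hdown _ hf2 _ _ (Finset.mem_insert_of_mem hu'')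
                (Finset.mem_insert_of_mem hw'')
  have hc1 : (insert w₂ τ).card = τ.card + 1 := Finset.card_insert_of_notMem h2τ
  have hw1ni : w₁ ∉ insert w₂ τ := by
    rw [Finset.mem_insert]
    rintro (rfl | h)
    · exact hne rfl
    · exact h1τ h
  have hc2 : (insert w₁ (insert w₂ τ)).card = τ.card + 2 := by
    rw [Finset.card_insert_of_notMem hw1ni, hc1]
  have := hbound _ hsf
  omega

end SC

/-- Every facet of a flag homology sphere admits a disjoint facet. -/
theorem exists_disjoint_facet {V : Type} [DecidableEq V] [Fintype V]
    (S : SC V) (d : ℕ) (hflag : S.Flag) (hS : S.IsHomologySphere d)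
    (T₁ : Finset V) (hT₁ : S.IsFacet T₁) :
    ∃ T₂ : Finset V, S.IsFacet T₂ ∧ Disjoint T₁ T₂ := by
  induction d generalizing S T₁ with
  | zero =>
    refine ⟨∅, ⟨S.empty_mem, ?_⟩, ?_⟩
    · intro t ht _
      exact Finset.card_eq_zero.mp (Nat.le_zero.mp (hS.1 t ht))
    · exact Finset.disjoint_empty_right _
  | succ d ih =>
    -- T₁ has cardinality d + 1
    have hT₁card : T₁.card = d + 1 := by
      obtain ⟨t, ht, hsub, hcard⟩ := hS.2.1 T₁ hT₁.1
      rw [← hT₁.2 t ht hsub]; exact hcard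
    have hT₁ne : T₁.Nonempty := Finset.card_pos.mp (by omega)
    obtain ⟨v, hv⟩ := hT₁ne
    have hvf : ({v} : Finset V) ∈ S.faces :=
      S.down hT₁.1 (Finset.singleton_subset_iff.mpr hv)
    set L := S.lk {v} with hL
    have hLflag : L.Flag := SC.lk_flag S hflag v hvf
    have hLsphere : L.IsHomologySphere d := SC.lk_sphere S d hS v hvf
    -- T₁.erase v is a facet of L
    have hfacetL : L.IsFacet (T₁.erase v) := by
      constructor
      · refine Or.inr ⟨?_, ?_⟩
        · rw [Finset.disjoint_singleton_right]; exact Finset.notMem_erase v T₁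
        · have : T₁.erase v ∪ {v} = insert v (T₁.erase v) := by
            ext x; simp [Finset.mem_insert, or_comm]
          rw [this, Finset.insert_erase hv]; exact hT₁.1
      · intro t ht hsub
        have hvt : v ∉ t := SC.lk_notMem ht
        have htv : insert v t ∈ S.faces := SC.lk_insert_mem hvf ht
        have hTsub : T₁ ⊆ insert v t := by
          intro x hx
          rcases eq_or_ne x v with rfl | hxv
          · exact Finset.mem_insert_self _ _
          · exact Finset.mem_insert_of_mem (hsub (Finset.mem_erase.mpr ⟨hxv, hx⟩))
        have heq : insert v t = T₁ := hT₁.2 _ htv hTsub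
        ext x
        constructor
        · intro hx
          refine Finset.mem_erase.mpr ⟨fun h => hvt (h ▸ hx), ?_⟩
          rw [← heq]; exact Finset.mem_insert_of_mem hx
        · intro hx
          obtain ⟨hxv, hxT⟩ := Finset.mem_erase.mp hx
          rw [← heq] at hxT
          rcases Finset.mem_insert.mp hxT with h | h
          · exact absurd h hxv
          · exact h
    obtain ⟨τ, hτfacet, hτdisj⟩ := ih L hLflag hLsphere (T₁.erase v) hfacetL
    -- τ has cardinality d
    have hτcard : τ.card = d := by
      obtain ⟨t, ht, hsub, hcard⟩ := hLsphere.2.1 τ hτfacet.1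
      rw [← hτfacet.2 t ht hsub]; exact hcard
    have hvτ : v ∉ τ := SC.lk_notMem hτfacet.1
    have hτS : τ ∈ S.faces :=
      S.down (SC.lk_union_mem hvf hτfacet.1) Finset.subset_union_left
    have hτT₁ : Disjoint T₁ τ := by
      rw [Finset.disjoint_left]
      intro x hx hxτ
      have hxv : x ≠ v := fun h => hvτ (h ▸ hxτ)
      exact (Finset.disjoint_left.mp hτdisj) (Finset.mem_erase.mpr ⟨hxv, hx⟩) hxτ
    -- the link of τ has a nonzero cycle in degree 1
    have htop := SC.rank_congr (show d + 1 - τ.card = 1 by omega) (hS.2.2 τ hτS).2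
    have hbot : (S.lk τ).cycles 1 ≠ ⊥ := by
      intro h
      rw [h, finrank_bot] at htop
      omega
    obtain ⟨c, hcmem, hcne⟩ := (Submodule.ne_bot_iff _).mp hbot
    have hcker : (S.lk τ).boundary 0 c = 0 := hcmem
    obtain ⟨w₁, w₂, hw12, hw₁, hw₂⟩ := SC.exists_two_vertices (S.lk τ) c hcne hcker
    -- properties of the two link vertices
    have hprop : ∀ w : V, ({w} : Finset V) ∈ (S.lk τ).faces →
        w ∉ τ ∧ insert w τ ∈ S.faces := by
      intro w hw
      rcases hw with h | ⟨hd, hm⟩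
      · simp at h
      · refine ⟨Finset.disjoint_singleton_left.mp hd, ?_⟩
        have : ({w} : Finset V) ∪ τ = insert w τ := by
          ext x; simp [Finset.mem_insert]
        rwa [this] at hm
    obtain ⟨h1τ, hf1⟩ := hprop w₁ hw₁
    obtain ⟨h2τ, hf2⟩ := hprop w₂ hw₂
    -- at least one of w₁, w₂ is not in T₁
    have hkey : w₁ ∉ T₁ ∨ w₂ ∉ T₁ := by
      by_contra h
      push_neg at h
      exact SC.flag_contra S (d + 1) hflag hS.1 T₁ τ hT₁.1 (by omega)
        w₁ w₂ hw12 h.1 h.2 h1τ h2τ hf1 hf2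
    -- pick a good vertex and build the facet
    have hbuild : ∀ w : V, w ∉ T₁ → w ∉ τ → insert w τ ∈ S.faces →
        ∃ T₂ : Finset V, S.IsFacet T₂ ∧ Disjoint T₁ T₂ := by
      intro w hwT hwτ hwf
      refine ⟨insert w τ, ⟨hwf, ?_⟩, ?_⟩
      · intro t ht hsub
        refine (Finset.eq_of_subset_of_card_le hsub ?_).symm
        have := hS.1 t ht
        rw [Finset.card_insert_of_notMem hwτ, hτcard]
        omega
      · rw [Finset.disjoint_right]
        intro x hx
        rcases Finset.mem_insert.mp hx with rfl | hx'
        · exact hwT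
        · exact fun hxT => (Finset.disjoint_right.mp hτT₁) hx' hxT
    rcases hkey with h | h
    · exact hbuild w₁ h h1τ hf1
    · exact hbuild w₂ h h2τ hf2

end
end
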